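/- Let K ⊂ ℝ² be a convex body with boundary Γ, α > 0, and x ∈ ℝ² with x ≠ 0. Then Γ ∩ (αΓ + x) cannot contain three line segments such that no two of them lie on one straight line. -/

import Mathlib

/-!
At the midpoint of each segment take supporting lines of `K` and of `L = αK + x`. Both contain
the segment, so their normals are parallel; opposite normals would squeeze `K ∩ L` into a line,
so there is one outer normal `fᵢ` common to `K` and `L`, and comparing the maxima of `fᵢ` on
`K` and on `L` gives `fᵢ x = (1 - α) max_K fᵢ`.

If `α = 1`, all three normals are orthogonal to `x`, so two of them point the same way and
their support lines coincide. If `α ≠ 1`, all three support lines pass through the centre `c`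
of the homothety. Each line contains a point `pᵢ ≠ c` of `K`, so `fⱼ (pᵢ - c) ≤ 0` for `j ≠ i`,
strictly unless two lines coincide; but writing `fᵢ = sᵢ · cross (pᵢ - c)`, strict signs force
`sᵢ sⱼ < 0` for all three pairs, which is impossible.
-/

def cross (p q : ℝ × ℝ) : ℝ := p.1 * q.2 - p.2 * q.1

lemma exists_ne_mul_nonneg (s : Fin 3 → ℝ) : ∃ i j, i ≠ j ∧ 0 ≤ s i * s j := by
  by_contra! h
  have h01 := h 0 1 (by decide)
  have h02 := h 0 2 (by decide)
  have h12 := h 1 2 (by decide)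
  nlinarith [mul_neg_of_pos_of_neg (mul_pos_of_neg_of_neg h01 h02) h12,
    mul_self_nonneg (s 0 * s 1 * s 2)]

lemma exists_forall_eq_mul_cross (f : ℝ × ℝ →L[ℝ] ℝ) {d : ℝ × ℝ} (hd : d ≠ 0)
    (hfd : f d = 0) : ∃ s, ∀ q, f q = s * cross d q := by
  have hf : ∀ q : ℝ × ℝ, f q = q.1 * f (1, 0) + q.2 * f (0, 1) := fun q => by
    conv_lhs => rw [show q = q.1 • ((1 : ℝ), (0 : ℝ)) + q.2 • ((0 : ℝ), (1 : ℝ)) by ext <;> simp]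
    simp only [map_add, map_smul, smul_eq_mul]
  have hN : 0 < d.1 ^ 2 + d.2 ^ 2 := by
    rcases d with ⟨d₁, d₂⟩
    have : d₁ ≠ 0 ∨ d₂ ≠ 0 := by
      rw [← not_and_or]
      rintro ⟨rfl, rfl⟩
      exact hd rfl
    rcases this with h | h <;> positivity
  refine ⟨(f (0, 1) * d.1 - f (1, 0) * d.2) / (d.1 ^ 2 + d.2 ^ 2), fun q => ?_⟩
  rw [hf d] at hfd
  rw [hf q, cross, div_mul_eq_mul_div, eq_div_iff hN.ne']
  linear_combination (d.1 * q.1 + d.2 * q.2) * hfd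

lemma exists_eq_smul_of_apply_eq_zero {f g : ℝ × ℝ →L[ℝ] ℝ} (hf : f ≠ 0) {d : ℝ × ℝ}
    (hd : d ≠ 0) (hfd : f d = 0) (hgd : g d = 0) : ∃ t : ℝ, g = t • f := by
  obtain ⟨s, hs⟩ := exists_forall_eq_mul_cross f hd hfd
  obtain ⟨s', hs'⟩ := exists_forall_eq_mul_cross g hd hgd
  have hs0 : s ≠ 0 := by
    rintro rfl
    exact hf (ContinuousLinearMap.ext fun q => by simp [hs])
  refine ⟨s' / s, ContinuousLinearMap.ext fun q => ?_⟩
  simp only [smul_apply, smul_eq_mul, hs, hs']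
  field_simp

lemma collinear_of_forall_apply_eq {f : ℝ × ℝ →L[ℝ] ℝ} (hf : f ≠ 0) {s : Set (ℝ × ℝ)} {c : ℝ}
    (h : ∀ p ∈ s, f p = c) : Collinear ℝ s := by
  have hker : vectorSpan ℝ s ≤ LinearMap.ker (f : ℝ × ℝ →ₗ[ℝ] ℝ) := by
    rw [vectorSpan_def, Submodule.span_le]
    rintro _ ⟨p, hp, q, hq, rfl⟩
    simp [h p hp, h q hq]
  have hrank := Module.Dual.finrank_ker_add_one_of_ne_zero
    (f := (f : ℝ × ℝ →ₗ[ℝ] ℝ)) (by exact_mod_cast hf)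
  rw [Module.finrank_prod, Module.finrank_self] at hrank
  rw [collinear_iff_finrank_le_one]
  exact (Submodule.finrank_mono hker).trans (by omega)

lemma exists_ne_pos_smul_eq_of_apply_eq_zero {f : Fin 3 → ℝ × ℝ →L[ℝ] ℝ} (hf : ∀ i, f i ≠ 0)
    {x : ℝ × ℝ} (hx : x ≠ 0) (hfx : ∀ i, f i x = 0) :
    ∃ i j, i ≠ j ∧ ∃ t : ℝ, 0 < t ∧ f j = t • f i := by
  choose s hs using fun i => exists_forall_eq_mul_cross (f i) hx (hfx i)
  have hs0 : ∀ i, s i ≠ 0 := fun i h0 =>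
    hf i (ContinuousLinearMap.ext fun q => by simp [hs, h0])
  obtain ⟨i, j, hij, hnn⟩ := exists_ne_mul_nonneg s
  have hpos : 0 < s i * s j := lt_of_le_of_ne hnn (mul_ne_zero (hs0 i) (hs0 j)).symm
  refine ⟨i, j, hij, s j / s i, ?_, ContinuousLinearMap.ext fun q => ?_⟩
  · rw [show s j / s i = s i * s j / s i ^ 2 by field_simp]
    exact div_pos hpos (sq_pos_of_ne_zero (hs0 i))
  · simp only [smul_apply, smul_eq_mul, hs]
    field_simp [hs0 i]

lemma exists_ne_nonneg_apply_of_apply_self_eq_zero {d : Fin 3 → ℝ × ℝ}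
    {f : Fin 3 → ℝ × ℝ →L[ℝ] ℝ} (hd : ∀ i, d i ≠ 0) (hfd : ∀ i, f i (d i) = 0) :
    ∃ i j, i ≠ j ∧ 0 ≤ f j (d i) := by
  choose s hs using fun i => exists_forall_eq_mul_cross (f i) (hd i) (hfd i)
  obtain ⟨i, j, hij, hnn⟩ := exists_ne_mul_nonneg s
  by_contra! h
  have hji := h j i hij.symm
  have hij' := h i j hij
  rw [hs] at hji hij'
  have hanti : cross (d i) (d j) = - cross (d j) (d i) := by simp only [cross]; ring
  rw [hanti, mul_neg, neg_lt_zero] at hji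
  nlinarith [mul_neg_of_pos_of_neg hji hij', mul_nonneg hnn (sq_nonneg (cross (d j) (d i)))]

lemma IsMaxOn.apply_eq_of_midpoint {E F : Type*} [AddCommGroup E] [Module ℝ E]
    [FunLike F E ℝ] [LinearMapClass F ℝ E ℝ] {f : F} {K : Set E} {a b : E}
    (hf : IsMaxOn f K (midpoint ℝ a b)) (ha : a ∈ K) (hb : b ∈ K) :
    f a = f (midpoint ℝ a b) ∧ f b = f (midpoint ℝ a b) := by
  have hmid : f (midpoint ℝ a b) = (f a + f b) / 2 := by
    rw [midpoint_eq_smul_add, map_smul, map_add, smul_eq_mul]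
    norm_num
    ring
  constructor <;> linarith [isMaxOn_iff.mp hf a ha, isMaxOn_iff.mp hf b hb]

lemma apply_eq_one_sub_mul_of_isMaxOn_image {E F : Type*} [AddCommGroup E] [Module ℝ E]
    [FunLike F E ℝ] [LinearMapClass F ℝ E ℝ] {f : F} {K : Set E} {α : ℝ} (hα : 0 ≤ α)
    {x a : E} (haK : a ∈ K) (haL : a ∈ (fun y => α • y + x) '' K) (hK : IsMaxOn f K a)
    (hL : IsMaxOn f ((fun y => α • y + x) '' K) a) : f x = (1 - α) * f a := by
  obtain ⟨y, hy, rfl⟩ := haL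
  have h₁ := isMaxOn_iff.mp hL _ ⟨_, haK, rfl⟩
  have h₂ := mul_le_mul_of_nonneg_left (isMaxOn_iff.mp hK y hy) hα
  simp only [map_add, map_smul, smul_eq_mul] at h₁ h₂ ⊢
  nlinarith

lemma exists_isMaxOn_of_segment_subset_frontier_inter {K L : Set (ℝ × ℝ)} (hK : Convex ℝ K)
    (hKc : IsClosed K) (hKi : (interior K).Nonempty) (hL : Convex ℝ L) (hLc : IsClosed L)
    (hLi : (interior L).Nonempty) (hKL : ¬ Collinear ℝ (K ∩ L)) {a b : ℝ × ℝ} (hab : a ≠ b)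
    (hseg : segment ℝ a b ⊆ frontier K ∩ frontier L) :
    ∃ f : ℝ × ℝ →L[ℝ] ℝ, f ≠ 0 ∧ IsMaxOn f K a ∧ IsMaxOn f L a ∧ f b = f a := by
  have hm := hseg (midpoint_mem_segment a b)
  have ha := hseg (left_mem_segment ℝ a b)
  have hb := hseg (right_mem_segment ℝ a b)
  obtain ⟨f, hf0, hfK⟩ := geometric_hahn_banach_of_nonempty_interior_point hK hm.1.2 hKi
  obtain ⟨g, hg0, hgL⟩ := geometric_hahn_banach_of_nonempty_interior_point hL hm.2.2 hLi
  obtain ⟨hfa, hfb⟩ := (isMaxOn_iff.mpr hfK).apply_eq_of_midpoint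
    (hKc.frontier_subset ha.1) (hKc.frontier_subset hb.1)
  obtain ⟨hga, hgb⟩ := (isMaxOn_iff.mpr hgL).apply_eq_of_midpoint
    (hLc.frontier_subset ha.2) (hLc.frontier_subset hb.2)
  obtain ⟨t, rfl⟩ := exists_eq_smul_of_apply_eq_zero hf0 (sub_ne_zero.mpr hab.symm)
    (by rw [map_sub, hfa, hfb, sub_self]) (by rw [map_sub, hga, hgb, sub_self])
  have ht : t ≠ 0 := by
    rintro rfl
    exact hg0 (zero_smul ℝ f)
  simp only [smul_apply, smul_eq_mul] at hgL
  rcases ht.lt_or_gt with ht | ht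
  · -- opposite outer normals squeeze `K ∩ L` onto the line through the segment
    refine absurd (collinear_of_forall_apply_eq hf0 (c := f (midpoint ℝ a b)) fun p hp => ?_) hKL
    exact le_antisymm (hfK p hp.1) ((mul_le_mul_left_of_neg ht).mp (hgL p hp.2))
  · refine ⟨f, hf0, isMaxOn_iff.mpr fun p hp => ?_, isMaxOn_iff.mpr fun p hp => ?_,
      hfb.trans hfa.symm⟩
    · exact hfa ▸ hfK p hp
    · exact hfa ▸ le_of_mul_le_mul_left (hgL p hp) ht

lemma collinear_of_smul_eq {f g : ℝ × ℝ →L[ℝ] ℝ} (hf : f ≠ 0) {t : ℝ} (ht : t ≠ 0)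
    (hg : g = t • f) {a b a' b' : ℝ × ℝ} (hb : f b = f a) (ha' : f a' = f a)
    (hb' : g b' = g a') : Collinear ℝ {a, b, a', b'} := by
  subst hg
  simp only [smul_apply, smul_eq_mul] at hb'
  refine collinear_of_forall_apply_eq hf (c := f a) fun p hp => ?_
  simp only [Set.mem_insert_iff, Set.mem_singleton_iff] at hp
  rcases hp with rfl | rfl | rfl | rfl
  exacts [rfl, hb, ha', (mul_left_cancel₀ ht hb').trans ha']

lemma exists_collinear_of_forall_apply_eq_zero {K : Set (ℝ × ℝ)} {A B : Fin 3 → ℝ × ℝ}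
    {f : Fin 3 → ℝ × ℝ →L[ℝ] ℝ} (hAK : ∀ i, A i ∈ K) (hf : ∀ i, f i ≠ 0)
    (hmax : ∀ i, IsMaxOn (f i) K (A i)) (hB : ∀ i, f i (B i) = f i (A i)) {x : ℝ × ℝ}
    (hx : x ≠ 0) (hfx : ∀ i, f i x = 0) : ∃ i j, i ≠ j ∧ Collinear ℝ {A i, B i, A j, B j} := by
  obtain ⟨i, j, hij, t, ht, hfj⟩ := exists_ne_pos_smul_eq_of_apply_eq_zero hf hx hfx
  refine ⟨i, j, hij, collinear_of_smul_eq (hf i) ht.ne' hfj (hB i) ?_ (hB j)⟩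
  have hj : ∀ p ∈ K, f i p ≤ f i (A j) := fun p hp => by
    have := isMaxOn_iff.mp (hmax j) p hp
    rw [hfj, smul_apply, smul_apply, smul_eq_mul, smul_eq_mul] at this
    exact le_of_mul_le_mul_left this ht
  exact le_antisymm (isMaxOn_iff.mp (hmax i) _ (hAK j)) (hj _ (hAK i))

lemma exists_collinear_of_forall_apply_eq {K : Set (ℝ × ℝ)} {A B : Fin 3 → ℝ × ℝ}
    {f : Fin 3 → ℝ × ℝ →L[ℝ] ℝ} (hAK : ∀ i, A i ∈ K) (hBK : ∀ i, B i ∈ K)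
    (hAB : ∀ i, A i ≠ B i) (hf : ∀ i, f i ≠ 0) (hmax : ∀ i, IsMaxOn (f i) K (A i))
    (hB : ∀ i, f i (B i) = f i (A i)) {c : ℝ × ℝ} (hfc : ∀ i, f i c = f i (A i)) :
    ∃ i j, i ≠ j ∧ Collinear ℝ {A i, B i, A j, B j} := by
  by_contra! hnocol
  have hnpar : ∀ i j, i ≠ j → ∀ t : ℝ, f j ≠ t • f i := by
    rintro i j hij t hfj
    have ht : t ≠ 0 := by
      rintro rfl
      exact hf j (hfj.trans (zero_smul ℝ _))
    refine hnocol i j hij (collinear_of_smul_eq (hf i) ht hfj (hB i) ?_ (hB j))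
    have := hfc j
    rw [hfj, smul_apply, smul_apply, smul_eq_mul, smul_eq_mul, hfc i] at this
    exact (mul_left_cancel₀ ht this).symm
  have hp : ∀ i, ∃ p ∈ K, f i p = f i c ∧ p ≠ c := fun i => by
    by_cases hAc : A i = c
    · exact ⟨B i, hBK i, by rw [hB, hfc], fun h => hAB i (hAc.trans h.symm)⟩
    · exact ⟨A i, hAK i, (hfc i).symm, hAc⟩
  choose p hpK hpc hpne using hp
  have hd : ∀ i, p i - c ≠ 0 := fun i => sub_ne_zero.mpr (hpne i)
  have hfd : ∀ i, f i (p i - c) = 0 := fun i => by rw [map_sub, hpc, sub_self]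
  obtain ⟨i, j, hij, hnn⟩ := exists_ne_nonneg_apply_of_apply_self_eq_zero hd hfd
  have hle : f j (p i - c) ≤ 0 := by
    rw [map_sub, hfc j, sub_nonpos]
    exact isMaxOn_iff.mp (hmax j) _ (hpK i)
  obtain ⟨t, ht⟩ := exists_eq_smul_of_apply_eq_zero (hf i) (hd i) (hfd i) (le_antisymm hle hnn)
  exact hnpar i j hij t ht

/-- Let `K ⊆ ℝ²` be a convex body with boundary `Γ`, `α > 0`, `x ≠ 0`. Then
`Γ ∩ (αΓ + x)` cannot contain three line segments such that no two of them lie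
on one straight line. -/
theorem stmt_6 (K : Set (ℝ × ℝ)) (hK : Convex ℝ K) (hcomp : IsCompact K)
    (hint : (interior K).Nonempty) (α : ℝ) (hα : 0 < α) (x : ℝ × ℝ) (hx : x ≠ 0)
    (A B : Fin 3 → ℝ × ℝ) (hne : ∀ i, A i ≠ B i)
    (hseg : ∀ i, segment ℝ (A i) (B i) ⊆
      frontier K ∩ ((fun y => α • y + x) '' frontier K))
    (hnocol : ∀ i j, i ≠ j → ¬ Collinear ℝ ({A i, B i, A j, B j} : Set (ℝ × ℝ))) :
    False := by
  set L := (fun y => α • y + x) '' K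
  have he : IsHomeomorph (fun y : ℝ × ℝ => α • y + x) :=
    ((Homeomorph.smulOfNeZero α hα.ne').trans (Homeomorph.addRight x)).isHomeomorph
  have hL : Convex ℝ L := by
    rw [show L = (fun y => x + α • y) '' K from Set.image_congr' fun y => add_comm _ _]
    exact hK.affinity x α
  have hLc : IsClosed L := (hcomp.image he.continuous).isClosed
  have hLi : (interior L).Nonempty := he.image_interior K ▸ hint.image _
  rw [he.image_frontier] at hseg
  have hAK : ∀ i, A i ∈ K ∩ L := fun i => Set.inter_subset_inter
    hcomp.isClosed.frontier_subset hLc.frontier_subset (hseg i (left_mem_segment ℝ _ _))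
  have hBK : ∀ i, B i ∈ K ∩ L := fun i => Set.inter_subset_inter
    hcomp.isClosed.frontier_subset hLc.frontier_subset (hseg i (right_mem_segment ℝ _ _))
  have hKL : ¬ Collinear ℝ (K ∩ L) := fun h => hnocol 0 1 (by decide) <| h.subset <| by
    simp only [Set.insert_subset_iff, Set.singleton_subset_iff]
    exact ⟨hAK 0, hBK 0, hAK 1, hBK 1⟩
  have hsupp : ∀ i, ∃ f : ℝ × ℝ →L[ℝ] ℝ, f ≠ 0 ∧ IsMaxOn f K (A i) ∧ f (B i) = f (A i) ∧
      f x = (1 - α) * f (A i) := fun i => by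
    obtain ⟨f, hf0, hfK, hfL, hfB⟩ := exists_isMaxOn_of_segment_subset_frontier_inter hK
      hcomp.isClosed hint hL hLc hLi hKL (hne i) (hseg i)
    exact ⟨f, hf0, hfK, hfB,
      apply_eq_one_sub_mul_of_isMaxOn_image hα.le (hAK i).1 (hAK i).2 hfK hfL⟩
  choose f hf0 hmax hB hfx using hsupp
  obtain ⟨i, j, hij, hcol⟩ : ∃ i j, i ≠ j ∧ Collinear ℝ {A i, B i, A j, B j} := by
    rcases eq_or_ne α 1 with rfl | hα1
    · exact exists_collinear_of_forall_apply_eq_zero (fun i => (hAK i).1) hf0 hmax hB hx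
        (by simpa using hfx)
    · -- every support line passes through the centre `(1 - α)⁻¹ • x` of the homothety
      refine exists_collinear_of_forall_apply_eq (fun i => (hAK i).1) (fun i => (hBK i).1) hne
        hf0 hmax hB (c := (1 - α)⁻¹ • x) fun i => ?_
      rw [map_smul, hfx, smul_eq_mul, inv_mul_cancel_left₀ (sub_ne_zero.mpr hα1.symm)]
  exact hnocol i j hij hcol
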